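/- Let Ω = [−3,3] ⊂ ℝ. For a ≥ 0 define R_a : [−3,3] → [−3,3] by R_a(x) = x for |x| ≥ 1 and R_a(x) = x + (1/10)·cos²(πx/2)·cos(ax) for |x| < 1. For a probability measure μ on Ω set κ(μ) := ∫_{[−2,−1]} (2−|x|) dμ(x) + μ([−1,1]) + ∫_{[1,2]} (2−x) dμ(x), a(μ) := 1/κ(μ) if κ(μ) > 0 and a(μ) := 0 otherwise, and f(μ) := (R_{a(μ)})_# μ. Then there is no map G : P([−3,3]) × [−3,3] → [−3,3] that is continuous (with the 1-Wasserstein topology on P([−3,3])) and satisfies f(μ) = G(μ,·)_# μ for all μ ∈ P([−3,3]). -/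

import Mathlib

open MeasureTheory Filter Set
open scoped ENNReal

/-- The 1-Wasserstein distance, via Kantorovich–Rubinstein duality. -/
noncomputable def W1 {E : Type*} [MeasurableSpace E] [PseudoMetricSpace E]
    (μ ν : Measure E) : ℝ :=
  ⨆ φ : {φ : E → ℝ // LipschitzWith 1 φ}, ((∫ x, φ.1 x ∂μ) - ∫ x, φ.1 x ∂ν)

/-- `P(Ω)`: the Borel probability measures supported in `Ω`. -/
def ProbOn {E : Type*} [MeasurableSpace E] (Ω : Set E) : Set (Measure E) :=
  {μ | IsProbabilityMeasure μ ∧ μ Ωᶜ = 0}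

/-- A map `f : P(Ω) → P(Ω)` is support-preserving. -/
def SupportPreservingProb {E : Type*} [MeasurableSpace E]
    (Ω : Set E) (f : Measure E → Measure E) : Prop :=
  ∀ n : ℕ, 0 < n → ∀ x : Fin n → E, (∀ i, x i ∈ Ω) →
    ∃ y : Fin n → E, (∀ i, y i ∈ Ω) ∧
      f (∑ i, ((n : ℝ≥0∞))⁻¹ • Measure.dirac (x i))
        = ∑ i, ((n : ℝ≥0∞))⁻¹ • Measure.dirac (y i) ∧
      ∀ i j, x i = x j → y i = y j

/-- `R_a(x) = x + (1/10)·cos²(πx/2)·cos(ax)` for `|x| < 1`, and `R_a(x) = x` otherwise. -/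
noncomputable def Rmap (a x : ℝ) : ℝ :=
  if |x| < 1 then x + (1 / 10) * Real.cos (Real.pi * x / 2) ^ 2 * Real.cos (a * x) else x

/-- `κ(μ) = ∫_{[-2,-1)} (2-|x|) dμ + μ([-1,1]) + ∫_{(1,2]} (2-x) dμ`. -/
noncomputable def kappa (μ : Measure ℝ) : ℝ :=
  (∫ x in Set.Ico (-2 : ℝ) (-1), (2 - |x|) ∂μ)
    + (μ (Set.Icc (-1 : ℝ) 1)).toReal
    + ∫ x in Set.Ioc (1 : ℝ) 2, (2 - x) ∂μ

/-- `a(μ) = 1/κ(μ)` if `κ(μ) > 0`, and `a(μ) = 0` otherwise. -/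
noncomputable def amu (μ : Measure ℝ) : ℝ :=
  if 0 < kappa μ then (kappa μ)⁻¹ else 0

/-- The counterexample map `f(μ) = (R_{a(μ)})_♯ μ`. -/
noncomputable def fCounter (μ : Measure ℝ) : Measure ℝ :=
  Measure.map (Rmap (amu μ)) μ

/-!
Test a hypothetical `G` on `μ_p = (1 - p) δ_3 + p δ_{1/2}`. Here `κ(μ_p) = p`, so
`f(μ_p) = (1 - p) δ_3 + p δ_{1/2 + cos(1/(2p))/20}`, and since the two atoms carry the different
masses `1 - p ≠ p`, the identity `f(μ_p) = G(μ_p, ·)_♯ μ_p` forces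
`G(μ_p, 1/2) = 1/2 + cos(1/(2p))/20`. As `W1(δ_3, μ_p) ≤ 5p/2`, continuity of `G` at `(δ_3, 1/2)`
would make this value converge as `p → 0`, yet it keeps returning to both `11/20` and `9/20`.
-/

namespace MeasureTheory.Measure

variable {α : Type*} [MeasurableSpace α]

noncomputable def twoPoint (p : ℝ) (x y : α) : Measure α :=
  ENNReal.ofReal (1 - p) • dirac x + ENNReal.ofReal p • dirac y

variable [MeasurableSingletonClass α]

theorem twoPoint_apply (p : ℝ) (x y : α) (s : Set α) :
    twoPoint p x y s =
      ENNReal.ofReal (1 - p) * s.indicator 1 x + ENNReal.ofReal p * s.indicator 1 y := by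
  simp only [twoPoint, add_apply, smul_apply, dirac_apply, smul_eq_mul]

theorem twoPoint_mem_probOn {Ω : Set α} {p : ℝ} {x y : α} (hp₀ : 0 ≤ p) (hp₁ : p ≤ 1)
    (hx : x ∈ Ω) (hy : y ∈ Ω) : twoPoint p x y ∈ ProbOn Ω := by
  refine ⟨⟨?_⟩, ?_⟩
  · rw [twoPoint_apply, indicator_of_mem (mem_univ x), indicator_of_mem (mem_univ y),
      Pi.one_apply, Pi.one_apply, mul_one, mul_one, ← ENNReal.ofReal_add (by linarith) hp₀]
    norm_num
  · simp [twoPoint_apply, hx, hy]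

theorem dirac_mem_probOn {Ω : Set α} {x : α} (hx : x ∈ Ω) : dirac x ∈ ProbOn Ω :=
  ⟨inferInstance, by simp [dirac_apply, hx]⟩

theorem map_twoPoint {β : Type*} [MeasurableSpace β] [MeasurableSingletonClass β]
    (g : α → β) (p : ℝ) (x y : α) :
    (twoPoint p x y).map g = twoPoint p (g x) (g y) := by
  rw [twoPoint, (aemeasurable_dirac.smul_measure _).map_add₀ (aemeasurable_dirac.smul_measure _),
    Measure.map_smul, Measure.map_smul, map_dirac, map_dirac, twoPoint]

theorem integral_twoPoint {p : ℝ} (hp₀ : 0 ≤ p) (hp₁ : p ≤ 1) (x y : α) (f : α → ℝ) :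
    ∫ z, f z ∂twoPoint p x y = (1 - p) * f x + p * f y := by
  rw [twoPoint, integral_add_measure, integral_smul_measure, integral_smul_measure,
    integral_dirac, integral_dirac, ENNReal.toReal_ofReal (by linarith),
    ENNReal.toReal_ofReal hp₀, smul_eq_mul, smul_eq_mul]
  · exact (integrable_dirac enorm_lt_top).smul_measure ENNReal.ofReal_ne_top
  · exact (integrable_dirac enorm_lt_top).smul_measure ENNReal.ofReal_ne_top

/-- Compare the masses of `{y}`: if `b ≠ y`, the right-hand side gives it mass `0` or `1 - p`. -/
theorem eq_of_twoPoint_eq {p : ℝ} (hp₀ : 0 < p) (hp₁ : p ≤ 1) (hp : p ≠ 1 / 2) {x y a b : α}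
    (hxy : x ≠ y) (h : twoPoint p x y = twoPoint p a b) : b = y := by
  by_contra hby
  have hmass := congrArg (fun μ : Measure α => μ {y}) h
  have hx : x ∉ ({y} : Set α) := hxy
  have hb : b ∉ ({y} : Set α) := hby
  simp only [twoPoint_apply, indicator_of_notMem hx, indicator_of_notMem hb,
    indicator_of_mem (mem_singleton y), Pi.one_apply, mul_zero, mul_one, zero_add,
    add_zero] at hmass
  by_cases ha : a ∈ ({y} : Set α)
  · rw [indicator_of_mem ha, Pi.one_apply, mul_one,
      ENNReal.ofReal_eq_ofReal_iff hp₀.le (by linarith)] at hmass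
    exact hp (by linarith)
  · rw [indicator_of_notMem ha, mul_zero, ENNReal.ofReal_eq_zero] at hmass
    linarith

theorem W1_dirac_twoPoint_le [PseudoMetricSpace α] {p : ℝ} (hp₀ : 0 ≤ p) (hp₁ : p ≤ 1)
    (x y : α) : W1 (dirac x) (twoPoint p x y) ≤ p * dist x y := by
  refine Real.iSup_le (fun ⟨φ, hφ⟩ => ?_) (by positivity)
  have hφxy : φ x - φ y ≤ dist x y := by
    simpa [Real.dist_eq] using (le_abs_self _).trans (hφ.dist_le_mul x y)
  rw [integral_dirac, integral_twoPoint hp₀ hp₁]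
  nlinarith

end MeasureTheory.Measure

open MeasureTheory.Measure

theorem Rmap_of_one_le_abs (a : ℝ) {x : ℝ} (hx : 1 ≤ |x|) : Rmap a x = x :=
  if_neg hx.not_gt

theorem Rmap_one_half (a : ℝ) : Rmap a (1 / 2) = 1 / 2 + Real.cos (a / 2) / 20 := by
  have hcos : Real.cos (Real.pi * (1 / 2) / 2) ^ 2 = 1 / 2 := by
    rw [show Real.pi * (1 / 2) / 2 = Real.pi / 4 by ring, Real.cos_pi_div_four, div_pow,
      Real.sq_sqrt zero_le_two]
    norm_num
  rw [Rmap, if_pos (by norm_num [abs_of_pos]), hcos]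
  ring_nf

theorem kappa_twoPoint {p : ℝ} (hp₀ : 0 ≤ p) : kappa (twoPoint p 3 (1 / 2)) = p := by
  have hleft : twoPoint p (3 : ℝ) (1 / 2) (Ico (-2) (-1)) = 0 := by
    rw [twoPoint_apply, indicator_of_notMem (by norm_num), indicator_of_notMem (by norm_num)]
    simp
  have hright : twoPoint p (3 : ℝ) (1 / 2) (Ioc 1 2) = 0 := by
    rw [twoPoint_apply, indicator_of_notMem (by norm_num), indicator_of_notMem (by norm_num)]
    simp
  have hmid : twoPoint p (3 : ℝ) (1 / 2) (Icc (-1) 1) = ENNReal.ofReal p := by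
    rw [twoPoint_apply, indicator_of_notMem (by norm_num), indicator_of_mem (by norm_num)]
    simp
  rw [kappa, Measure.restrict_eq_zero.mpr hleft, Measure.restrict_eq_zero.mpr hright,
    integral_zero_measure, integral_zero_measure, hmid, ENNReal.toReal_ofReal hp₀]
  ring

theorem fCounter_twoPoint {p : ℝ} (hp₀ : 0 < p) :
    fCounter (twoPoint p 3 (1 / 2)) = twoPoint p 3 (1 / 2 + Real.cos (p⁻¹ / 2) / 20) := by
  rw [fCounter, amu, kappa_twoPoint hp₀.le, if_pos hp₀, map_twoPoint, Rmap_one_half,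
    Rmap_of_one_le_abs _ (by norm_num [abs_of_pos])]

theorem apply_one_half_of_fCounter_eq_map {G : Measure ℝ → ℝ → ℝ}
    (hG : ∀ μ ∈ ProbOn (Icc (-3 : ℝ) 3), fCounter μ = Measure.map (G μ) μ)
    {p : ℝ} (hp₀ : 0 < p) (hp : p < 1 / 2) :
    G (twoPoint p 3 (1 / 2)) (1 / 2) = 1 / 2 + Real.cos (p⁻¹ / 2) / 20 := by
  have h := hG _
    (twoPoint_mem_probOn (x := 3) (y := 1 / 2) hp₀.le (by linarith) (by norm_num) (by norm_num))
  rw [fCounter_twoPoint hp₀, map_twoPoint] at h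
  refine eq_of_twoPoint_eq hp₀ (by linarith) hp.ne (fun h3 => ?_) h
  linarith [Real.cos_le_one (p⁻¹ / 2)]

theorem exists_mem_Ioo_cos_inv_div_two_eq {δ : ℝ} (hδ : 0 < δ) (θ : ℝ) :
    ∃ p ∈ Ioo 0 δ, Real.cos (p⁻¹ / 2) = Real.cos θ := by
  obtain ⟨n, hn⟩ := exists_nat_gt (δ⁻¹ + |θ|)
  set a := θ + n * (2 * Real.pi)
  have ha : δ⁻¹ < a := by
    nlinarith [neg_abs_le θ, Real.pi_gt_three, n.cast_nonneg (α := ℝ)]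
  have ha₀ : 0 < a := (inv_pos.2 hδ).trans ha
  refine ⟨(2 * a)⁻¹, ⟨inv_pos.2 (by linarith), ?_⟩, ?_⟩
  · rw [inv_lt_comm₀ (by linarith) hδ]
    linarith
  · rw [inv_inv, mul_div_cancel_left₀ a two_ne_zero, Real.cos_add_nat_mul_two_pi]

theorem fCounter_not_inContext :
    ¬ ∃ G : Measure ℝ → ℝ → ℝ,
        (∀ μ ∈ ProbOn (Set.Icc (-3 : ℝ) 3), ∀ x ∈ Set.Icc (-3 : ℝ) 3,
          G μ x ∈ Set.Icc (-3 : ℝ) 3) ∧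
        (∀ μ ∈ ProbOn (Set.Icc (-3 : ℝ) 3), ∀ x ∈ Set.Icc (-3 : ℝ) 3, ∀ ε > (0 : ℝ),
          ∃ δ > (0 : ℝ), ∀ ν ∈ ProbOn (Set.Icc (-3 : ℝ) 3), ∀ y ∈ Set.Icc (-3 : ℝ) 3,
            W1 μ ν + dist x y < δ → dist (G μ x) (G ν y) < ε) ∧
        (∀ μ ∈ ProbOn (Set.Icc (-3 : ℝ) 3), fCounter μ = Measure.map (G μ) μ) := by
  rintro ⟨G, -, hcont, hpush⟩
  obtain ⟨δ, hδ, hG⟩ := hcont (dirac 3) (dirac_mem_probOn (by norm_num)) (1 / 2) (by norm_num)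
    (1 / 20) (by norm_num)
  have hnear : ∀ p ∈ Ioo 0 (min (δ / 3) (1 / 2)),
      |G (dirac 3) (1 / 2) - (1 / 2 + Real.cos (p⁻¹ / 2) / 20)| < 1 / 20 := by
    rintro p ⟨hp₀, hp⟩
    have hp_half : p < 1 / 2 := hp.trans_le (min_le_right _ _)
    have hp_δ : p < δ / 3 := hp.trans_le (min_le_left _ _)
    rw [← apply_one_half_of_fCounter_eq_map hpush hp₀ hp_half, ← Real.dist_eq]
    refine hG _ (twoPoint_mem_probOn hp₀.le (by linarith) (by norm_num) (by norm_num)) _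
      (by norm_num) ?_
    rw [dist_self, add_zero]
    refine (W1_dirac_twoPoint_le hp₀.le (by linarith) (3 : ℝ) (1 / 2)).trans_lt ?_
    rw [Real.dist_eq, abs_of_pos (by norm_num)]
    linarith
  have hδ' : 0 < min (δ / 3) (1 / 2) := lt_min (by positivity) (by norm_num)
  obtain ⟨p, hp, hcos_p⟩ := exists_mem_Ioo_cos_inv_div_two_eq hδ' 0
  obtain ⟨q, hq, hcos_q⟩ := exists_mem_Ioo_cos_inv_div_two_eq hδ' Real.pi
  have hp_near := hnear p hp
  have hq_near := hnear q hq
  rw [hcos_p, Real.cos_zero] at hp_near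
  rw [hcos_q, Real.cos_pi] at hq_near
  rw [abs_lt] at hp_near hq_near
  linarith
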